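/- (Residue evaluation of the N_f = 1 index integral.) Let p, b be complex numbers with 0 < |p| < 1 and |p| < |b| < 1, and let k be a non-negative integer. Then (1/2π) ∫_0^{2π} [(b p^{1+k} e^{iθ}; p²)_∞ (b p^{1+k} e^{−iθ}; p²)_∞ / ((p^{1+k} e^{iθ}/b; p²)_∞ (p^{1+k} e^{−iθ}/b; p²)_∞)] dθ = (p^{2+2k}, b²; p²)_∞ / (p², p^{2+2k}/b²; p²)_∞ · ₂φ₁(p^{2+2k}/b², p²/b²; p^{2+2k}; p², b²). (With q = p², a = b², this evaluates the contour integral occurring in the superconformal index I_{e,N_f=1;h} as a sum over residues of the poles inside the unit circle.) -/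

import Mathlib

open scoped BigOperators Real

/-- The infinite q-Pochhammer symbol `(z;q)_∞ = ∏_{j=0}^∞ (1 - z q^j)`. -/
noncomputable def qPochInf (z q : ℂ) : ℂ := ∏' j : ℕ, (1 - z * q ^ j)

/-- The q-Pochhammer symbol `(z;q)_n = (z;q)_∞ / (z q^n;q)_∞` for `n : ℤ`. -/
noncomputable def qPochInt (z q : ℂ) (n : ℤ) : ℂ :=
  qPochInf z q / qPochInf (z * q ^ n) q

/-- The basic hypergeometric series `₂φ₁(A,B;C;q,Z)`. -/
noncomputable def phi21 (A B C q Z : ℂ) : ℂ :=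
  ∑' n : ℕ, (qPochInt A q n * qPochInt B q n) /
    (qPochInt q q n * qPochInt C q n) * Z ^ n

/-!
Write `q = p²`, `a = b²`, `d = p^{1+k}/b` and `w = e^{iθ}`. By the q-binomial theorem
`(a d w;q)_∞ / (d w;q)_∞ = ∑ₙ (a;q)ₙ/(q;q)ₙ (d w)ⁿ` for `|d| < 1`, so the integrand is the product
of two absolutely convergent Fourier series in `w` and `w⁻¹`, and integrating over the circle picks
out the diagonal: the integral is `2π · ₂φ₁(a, a; q; q, d²)`. Heine's transformation
`₂φ₁(A,B;C;q,Z) = (B, AZ;q)_∞/(C, Z;q)_∞ · ₂φ₁(C/B, Z; AZ; q, B)` turns this into the stated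
right-hand side. The q-binomial theorem itself comes from the functional equation
`(1 - z) f(z) = (1 - a z) f(q z)`, iterated and passed to the limit, and Heine's transformation from
summing a double series of q-binomial expansions in both orders.
-/

open Filter Topology Finset

noncomputable def qPoch (z q : ℂ) (n : ℕ) : ℂ := ∏ j ∈ range n, (1 - z * q ^ j)

noncomputable def phi21Term (A B C q Z : ℂ) (n : ℕ) : ℂ :=
  qPoch A q n * qPoch B q n / (qPoch q q n * qPoch C q n) * Z ^ n

section QPochhammer

variable {z q : ℂ}

lemma qPoch_succ (z q : ℂ) (n : ℕ) : qPoch z q (n + 1) = qPoch z q n * (1 - z * q ^ n) :=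
  prod_range_succ _ n

lemma qPoch_zero_left (q : ℂ) (n : ℕ) : qPoch 0 q n = 1 := by simp [qPoch]

lemma norm_mul_pow_lt_one (hq : ‖q‖ ≤ 1) (hz : ‖z‖ < 1) (n : ℕ) : ‖z * q ^ n‖ < 1 := by
  rw [norm_mul, norm_pow]
  exact mul_lt_one_of_nonneg_of_lt_one_left (norm_nonneg z) hz
    (pow_le_one₀ (norm_nonneg q) hq)

lemma one_sub_mul_pow_ne_zero (hq : ‖q‖ ≤ 1) (hz : ‖z‖ < 1) (n : ℕ) : 1 - z * q ^ n ≠ 0 := by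
  intro h
  simpa [← sub_eq_zero.mp h] using norm_mul_pow_lt_one hq hz n

lemma qPoch_ne_zero (hq : ‖q‖ ≤ 1) (hz : ‖z‖ < 1) (n : ℕ) : qPoch z q n ≠ 0 :=
  prod_ne_zero_iff.2 fun j _ ↦ one_sub_mul_pow_ne_zero hq hz j

lemma summable_norm_mul_pow (z : ℂ) (hq : ‖q‖ < 1) : Summable fun j : ℕ ↦ ‖z * q ^ j‖ := by
  simpa [norm_pow] using (summable_geometric_of_lt_one (norm_nonneg q) hq).mul_left ‖z‖

lemma multipliable_one_sub_mul_pow (z : ℂ) (hq : ‖q‖ < 1) :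
    Multipliable fun j : ℕ ↦ 1 - z * q ^ j := by
  simpa [sub_eq_add_neg] using
    multipliable_one_add_of_summable (f := fun j : ℕ ↦ -(z * q ^ j))
      (by simpa using summable_norm_mul_pow z hq)

lemma tendsto_qPoch (z : ℂ) (hq : ‖q‖ < 1) :
    Tendsto (qPoch z q) atTop (𝓝 (qPochInf z q)) :=
  (multipliable_one_sub_mul_pow z hq).hasProd.tendsto_prod_nat

lemma qPochInf_eq_qPoch_mul (z : ℂ) (hq : ‖q‖ < 1) (n : ℕ) :
    qPochInf z q = qPoch z q n * qPochInf (z * q ^ n) q := by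
  have hshift : (fun j ↦ 1 - z * q ^ (j + n)) = fun j ↦ 1 - z * q ^ n * q ^ j := by
    ext j; ring
  have h := Multipliable.prod_mul_tprod_nat_mul' (f := fun j ↦ 1 - z * q ^ j) (k := n)
    (hshift ▸ multipliable_one_sub_mul_pow (z * q ^ n) hq)
  rw [hshift] at h
  exact h.symm

lemma qPochInf_ne_zero (hq : ‖q‖ < 1) (hz : ‖z‖ < 1) : qPochInf z q ≠ 0 := by
  have h := tprod_one_add_ne_zero_of_summable (R := ℂ) (ι := ℕ) (f := fun j ↦ -(z * q ^ j))
    (fun j ↦ by rw [← sub_eq_add_neg]; exact one_sub_mul_pow_ne_zero hq.le hz j)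
    (by simpa only [norm_neg] using summable_norm_mul_pow z hq)
  simpa only [qPochInf, ← sub_eq_add_neg] using h

lemma qPochInt_natCast (hq : ‖q‖ < 1) (hz : ‖z‖ < 1) (n : ℕ) : qPochInt z q n = qPoch z q n := by
  rw [qPochInt, zpow_natCast, qPochInf_eq_qPoch_mul z hq n,
    mul_div_cancel_right₀ _ (qPochInf_ne_zero hq (norm_mul_pow_lt_one hq.le hz n))]

end QPochhammer

lemma summable_of_eq_mul_of_tendsto {u r : ℕ → ℂ} {ρ : ℂ} (hu : ∀ n, u (n + 1) = r n * u n)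
    (hr : Tendsto r atTop (𝓝 ρ)) (hρ : ‖ρ‖ < 1) : Summable u := by
  obtain ⟨c, hρc, hc⟩ := exists_between hρ
  refine summable_of_ratio_norm_eventually_le hc ?_
  filter_upwards [hr.norm.eventually_le_const hρc] with n hn
  rw [hu, norm_mul]
  exact mul_le_mul_of_nonneg_right hn (norm_nonneg _)

section Phi21

variable {A B C q Z : ℂ}

lemma phi21Term_succ (A B C q Z : ℂ) (n : ℕ) :
    phi21Term A B C q Z (n + 1) =
      (1 - A * q ^ n) * (1 - B * q ^ n) / ((1 - q * q ^ n) * (1 - C * q ^ n)) * Z *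
        phi21Term A B C q Z n := by
  simp only [phi21Term, qPoch_succ, pow_succ, div_eq_mul_inv, mul_inv]
  ring

lemma summable_phi21Term (A B C : ℂ) (hq : ‖q‖ < 1) (hZ : ‖Z‖ < 1) :
    Summable (phi21Term A B C q Z) := by
  refine summable_of_eq_mul_of_tendsto (phi21Term_succ A B C q Z) ?_ hZ
  have hpow := tendsto_pow_atTop_nhds_zero_of_norm_lt_one hq
  have hfactor : ∀ x : ℂ, Tendsto (fun n : ℕ ↦ 1 - x * q ^ n) atTop (𝓝 1) := fun x ↦ by
    simpa using tendsto_const_nhds.sub (hpow.const_mul x)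
  simpa using
    (((hfactor A).mul (hfactor B)).div ((hfactor q).mul (hfactor C)) (by simp)).mul_const Z

lemma phi21_eq_tsum_phi21Term (hq : ‖q‖ < 1) (hA : ‖A‖ < 1) (hB : ‖B‖ < 1) (hC : ‖C‖ < 1) :
    phi21 A B C q Z = ∑' n, phi21Term A B C q Z n := by
  simp only [phi21, phi21Term, qPochInt_natCast hq hA, qPochInt_natCast hq hB,
    qPochInt_natCast hq hq, qPochInt_natCast hq hC]

lemma phi21Term_comm (A B C q Z : ℂ) : phi21Term A B C q Z = phi21Term B A C q Z := by
  ext n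
  simp only [phi21Term, mul_comm (qPoch A q n)]

end Phi21

noncomputable def qBinomSeriesCoeff (a q : ℂ) (n : ℕ) : ℂ := qPoch a q n / qPoch q q n

noncomputable def qBinomSeries (a q z : ℂ) : ℂ := ∑' n, qBinomSeriesCoeff a q n * z ^ n

section QBinomial

variable {a q z : ℂ}

lemma qBinomSeriesCoeff_succ_mul (a : ℂ) (hq : ‖q‖ < 1) (n : ℕ) :
    qBinomSeriesCoeff a q (n + 1) * (1 - q ^ (n + 1)) =
      qBinomSeriesCoeff a q n * (1 - a * q ^ n) := by
  have hfactor : 1 - q ^ (n + 1) ≠ 0 := by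
    simpa [pow_succ'] using one_sub_mul_pow_ne_zero hq.le hq n
  have hpoch : qPoch q q n ≠ 0 := qPoch_ne_zero hq.le hq n
  rw [qBinomSeriesCoeff, qBinomSeriesCoeff, qPoch_succ, qPoch_succ, ← pow_succ']
  field_simp

lemma summable_qBinomSeriesCoeff_mul_pow (a : ℂ) (hq : ‖q‖ < 1) (hz : ‖z‖ < 1) :
    Summable fun n ↦ qBinomSeriesCoeff a q n * z ^ n :=
  (summable_phi21Term a 0 0 hq hz).congr fun n ↦ by simp [phi21Term, qBinomSeriesCoeff, qPoch_zero_left]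

lemma qBinomSeries_zero (a q : ℂ) : qBinomSeries a q 0 = 1 := by
  rw [qBinomSeries, tsum_eq_single 0 fun n hn ↦ by simp [hn]]
  simp [qBinomSeriesCoeff, qPoch]

lemma one_sub_mul_qBinomSeries (a : ℂ) (hq : ‖q‖ < 1) (hz : ‖z‖ < 1) :
    (1 - z) * qBinomSeries a q z = (1 - a * z) * qBinomSeries a q (z * q) := by
  set c := qBinomSeriesCoeff a q
  have hS := (summable_qBinomSeriesCoeff_mul_pow a hq hz).hasSum
  have hSq := (summable_qBinomSeriesCoeff_mul_pow (z := z * q) a hq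
    (by simpa using norm_mul_pow_lt_one hq.le hz 1)).hasSum
  -- compare coefficients of `z ^ (n + 1)` on both sides
  have hu : HasSum (fun n ↦ c n * (1 - q ^ n) * z ^ n)
      (qBinomSeries a q z - qBinomSeries a q (z * q)) :=
    (hS.sub hSq).congr_fun fun n ↦ by ring
  have hv : HasSum (fun n ↦ z * (c n * (1 - a * q ^ n) * z ^ n))
      (z * (qBinomSeries a q z - a * qBinomSeries a q (z * q))) :=
    ((hS.sub (hSq.mul_left a)).congr_fun fun n ↦ by ring).mul_left z
  rw [← hasSum_nat_add_iff' 1] at hu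
  simp only [range_one, sum_singleton, pow_zero, sub_self, mul_zero, zero_mul, sub_zero] at hu
  have hshift : (fun n ↦ c (n + 1) * (1 - q ^ (n + 1)) * z ^ (n + 1)) =
      fun n ↦ z * (c n * (1 - a * q ^ n) * z ^ n) := by
    ext n; rw [qBinomSeriesCoeff_succ_mul a hq n]; ring
  rw [hshift] at hu
  linear_combination hu.unique hv

lemma qPoch_mul_qBinomSeries (a : ℂ) (hq : ‖q‖ < 1) (hz : ‖z‖ < 1) (n : ℕ) :
    qPoch z q n * qBinomSeries a q z = qPoch (a * z) q n * qBinomSeries a q (z * q ^ n) := by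
  induction n with
  | zero => simp [qPoch]
  | succ n ih =>
    have hstep := one_sub_mul_qBinomSeries a hq (norm_mul_pow_lt_one hq.le hz n)
    rw [qPoch_succ, qPoch_succ, mul_right_comm, ih, pow_succ, ← mul_assoc]
    linear_combination qPoch (a * z) q n * hstep

lemma tendsto_qBinomSeries_mul_pow (a : ℂ) (hq : ‖q‖ < 1) (hz : ‖z‖ < 1) :
    Tendsto (fun n ↦ qBinomSeries a q (z * q ^ n)) atTop (𝓝 1) := by
  have hpow := tendsto_pow_atTop_nhds_zero_of_norm_lt_one hq
  rw [← qBinomSeries_zero a q]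
  refine tendsto_tsum_of_dominated_convergence
    (summable_qBinomSeriesCoeff_mul_pow a hq hz).norm
    (fun m ↦ by simpa using ((hpow.const_mul z).pow m).const_mul (qBinomSeriesCoeff a q m))
    (Eventually.of_forall fun n m ↦ ?_)
  rw [norm_mul, norm_mul, norm_pow, norm_pow]
  gcongr
  rw [norm_mul, norm_pow]
  exact mul_le_of_le_one_right (norm_nonneg z) (pow_le_one₀ (norm_nonneg q) hq.le)

theorem qBinomSeries_eq (a : ℂ) (hq : ‖q‖ < 1) (hz : ‖z‖ < 1) :
    qBinomSeries a q z = qPochInf (a * z) q / qPochInf z q := by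
  rw [eq_div_iff (qPochInf_ne_zero hq hz), mul_comm]
  have hlhs := (tendsto_qPoch z hq).mul_const (qBinomSeries a q z)
  have hrhs := (tendsto_qPoch (a * z) hq).mul (tendsto_qBinomSeries_mul_pow a hq hz)
  rw [mul_one] at hrhs
  exact tendsto_nhds_unique (hlhs.congr fun n ↦ qPoch_mul_qBinomSeries a hq hz n) hrhs

lemma qBinomSeries_mul_pow_eq (hq : ‖q‖ < 1) (hz : ‖z‖ < 1) (haz : ‖a * z‖ < 1) (n : ℕ) :
    qBinomSeries a q (z * q ^ n) =
      qPochInf (a * z) q / qPochInf z q * (qPoch z q n / qPoch (a * z) q n) := by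
  have h := qPoch_mul_qBinomSeries a hq hz n
  rw [qBinomSeries_eq a hq hz] at h
  rw [mul_div_assoc', eq_div_iff (qPoch_ne_zero hq.le haz n)]
  linear_combination -h

end QBinomial

theorem tsum_phi21Term_eq_heine {A B C Z q : ℂ} (hq : ‖q‖ < 1) (hB0 : B ≠ 0) (hB : ‖B‖ < 1)
    (hC : ‖C‖ < 1) (hZ : ‖Z‖ < 1) (hAZ : ‖A * Z‖ < 1) :
    ∑' n, phi21Term A B C q Z n =
      qPochInf B q * qPochInf (A * Z) q / (qPochInf C q * qPochInf Z q) *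
        ∑' m, phi21Term (C / B) Z (A * Z) q B m := by
  -- expand `(C q^n;q)_∞ / (B q^n;q)_∞` by the q-binomial theorem and sum the double series
  -- `g n m` in the other order
  set g : ℕ → ℕ → ℂ := fun n m ↦
    qBinomSeriesCoeff A q n * Z ^ n * (qBinomSeriesCoeff (C / B) q m * (B * q ^ n) ^ m)
  have hCB : C / B * B = C := div_mul_cancel₀ C hB0
  have hrow (n : ℕ) : ∑' m, g n m = qPochInf C q / qPochInf B q * phi21Term A B C q Z n := by
    rw [tsum_mul_left]
    change _ * qBinomSeries (C / B) q (B * q ^ n) = _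
    rw [qBinomSeries_mul_pow_eq hq hB (by rwa [hCB]), hCB, phi21Term, qBinomSeriesCoeff]
    ring
  have hcol (m : ℕ) :
      ∑' n, g n m = qPochInf (A * Z) q / qPochInf Z q * phi21Term (C / B) Z (A * Z) q B m := by
    have hterm (n : ℕ) : g n m = qBinomSeriesCoeff (C / B) q m * B ^ m *
        (qBinomSeriesCoeff A q n * (Z * q ^ m) ^ n) := by
      simp only [g, mul_pow, ← pow_mul, mul_comm n m]
      ring
    rw [tsum_congr hterm, tsum_mul_left]
    change _ * qBinomSeries A q (Z * q ^ m) = _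
    rw [qBinomSeries_mul_pow_eq hq hZ hAZ, phi21Term, qBinomSeriesCoeff]
    ring
  have hsummable : Summable (Function.uncurry g) := by
    refine ((summable_qBinomSeriesCoeff_mul_pow A hq hZ).norm.mul_norm
      (summable_qBinomSeriesCoeff_mul_pow (C / B) hq hB).norm).of_norm_bounded fun ⟨n, m⟩ ↦ ?_
    simp only [Function.uncurry, g, norm_mul, norm_pow]
    gcongr
    exact mul_le_of_le_one_right (norm_nonneg B) (pow_le_one₀ (norm_nonneg q) hq.le)
  have hswap := hsummable.tsum_comm
  rw [tsum_congr hrow, tsum_congr hcol, tsum_mul_left, tsum_mul_left] at hswap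
  have hBne := qPochInf_ne_zero hq hB
  have hZne := qPochInf_ne_zero hq hZ
  rw [div_mul_eq_mul_div, eq_div_iff (mul_ne_zero (qPochInf_ne_zero hq hC) hZne)]
  field_simp at hswap
  linear_combination -hswap

section Circle

open Complex

lemma integral_exp_mul_I_pow_mul_exp_neg_mul_I_pow (m n : ℕ) :
    ∫ θ in (0 : ℝ)..(2 * π), exp (θ * I) ^ m * exp (-(θ * I)) ^ n =
      if m = n then (2 * π : ℂ) else 0 := by
  have hexp (θ : ℝ) : exp (θ * I) ^ m * exp (-(θ * I)) ^ n = exp ((m - n : ℂ) * I * θ) := by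
    rw [← exp_nat_mul, ← exp_nat_mul, ← exp_add]
    ring_nf
  simp_rw [hexp]
  split_ifs with h
  · simp [h]
  · have hmn : (m - n : ℂ) * I ≠ 0 :=
      mul_ne_zero (sub_ne_zero.2 (Nat.cast_injective.ne h)) I_ne_zero
    have hperiod : exp ((m - n : ℂ) * I * ↑(2 * π)) = 1 := by
      rw [← exp_int_mul_two_pi_mul_I (m - n)]
      push_cast
      ring_nf
    rw [integral_exp_mul_complex hmn, hperiod]
    simp

theorem integral_tsum_mul_tsum_exp_mul_I {f g : ℕ → ℂ} (hf : Summable fun n ↦ ‖f n‖)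
    (hg : Summable fun n ↦ ‖g n‖) :
    ∫ θ in (0 : ℝ)..(2 * π),
        (∑' n, f n * exp (θ * I) ^ n) * ∑' m, g m * exp (-(θ * I)) ^ m =
      2 * π * ∑' n, f n * g n := by
  set F : ℕ × ℕ → ℝ → ℂ := fun x θ ↦ f x.1 * g x.2 * (exp (θ * I) ^ x.1 * exp (-(θ * I)) ^ x.2)
  have hnorm (θ : ℝ) : ‖exp (θ * I)‖ = 1 ∧ ‖exp (-(θ * I))‖ = 1 :=
    ⟨norm_exp_ofReal_mul_I θ, by simpa using norm_exp_ofReal_mul_I (-θ)⟩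
  have hnormF (x : ℕ × ℕ) (θ : ℝ) : ‖F x θ‖ = ‖f x.1‖ * ‖g x.2‖ := by
    simp [F, (hnorm θ).1, (hnorm θ).2]
  have hpointwise (θ : ℝ) : HasSum (F · θ)
      ((∑' n, f n * exp (θ * I) ^ n) * ∑' m, g m * exp (-(θ * I)) ^ m) := by
    have hsum := summable_mul_of_summable_norm (f := fun n ↦ f n * exp (θ * I) ^ n)
      (g := fun m ↦ g m * exp (-(θ * I)) ^ m) (by simpa [(hnorm θ).1] using hf)
      (by simpa [(hnorm θ).2] using hg)
    rw [tsum_mul_tsum_of_summable_norm (by simpa [(hnorm θ).1] using hf)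
      (by simpa [(hnorm θ).2] using hg)]
    exact hsum.hasSum.congr_fun fun x ↦ by ring
  have hcont (x : ℕ × ℕ) : Continuous (F x) := by fun_prop
  have hsumF : HasSum (fun x ↦ ∫ θ in (0 : ℝ)..(2 * π), F x θ)
      (∫ θ in (0 : ℝ)..(2 * π),
        (∑' n, f n * exp (θ * I) ^ n) * ∑' m, g m * exp (-(θ * I)) ^ m) :=
    intervalIntegral.hasSum_integral_of_dominated_convergence (fun x _ ↦ ‖f x.1‖ * ‖g x.2‖)
      (fun x ↦ (hcont x).aestronglyMeasurable)
      (fun x ↦ .of_forall fun θ _ ↦ (hnormF x θ).le)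
      (.of_forall fun _ _ ↦ hf.mul_of_nonneg hg (fun _ ↦ norm_nonneg _) fun _ ↦ norm_nonneg _)
      intervalIntegrable_const (.of_forall fun θ _ ↦ hpointwise θ)
  have hterm (x : ℕ × ℕ) : ∫ θ in (0 : ℝ)..(2 * π), F x θ =
      f x.1 * g x.2 * if x.1 = x.2 then (2 * π : ℂ) else 0 := by
    rw [intervalIntegral.integral_const_mul, integral_exp_mul_I_pow_mul_exp_neg_mul_I_pow]
  simp_rw [hterm] at hsumF
  have hdiag : Function.Injective fun n : ℕ ↦ (n, n) := fun _ _ h ↦ (Prod.ext_iff.1 h).1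
  have hdiagSum := (hdiag.hasSum_iff fun x hx ↦ ?_).mpr hsumF
  · rw [← hdiagSum.tsum_eq, tsum_mul_left.symm.trans (tsum_congr fun n ↦ ?_)]
    simp [mul_comm]
  · rw [if_neg fun h ↦ hx ⟨x.1, Prod.ext rfl h⟩, mul_zero]

end Circle

open Complex in
theorem integral_qPochInf_ratio {a d q : ℂ} (hq : ‖q‖ < 1) (hd : ‖d‖ < 1) :
    ∫ θ in (0 : ℝ)..(2 * π),
        qPochInf (a * d * exp (θ * I)) q * qPochInf (a * d * exp (-(θ * I))) q /
          (qPochInf (d * exp (θ * I)) q * qPochInf (d * exp (-(θ * I))) q) =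
      2 * π * ∑' n, phi21Term a a q q (d ^ 2) n := by
  set c : ℕ → ℂ := fun n ↦ qBinomSeriesCoeff a q n * d ^ n
  have hratio {w : ℂ} (hw : ‖w‖ = 1) :
      qPochInf (a * d * w) q / qPochInf (d * w) q = ∑' n, c n * w ^ n := by
    rw [mul_assoc, ← qBinomSeries_eq a hq (by rwa [norm_mul, hw, mul_one]), qBinomSeries]
    simp only [c, mul_pow, mul_assoc]
  have hθ (θ : ℝ) : ‖exp (θ * I)‖ = 1 := norm_exp_ofReal_mul_I θ
  have hθ' (θ : ℝ) : ‖exp (-(θ * I))‖ = 1 := by simpa using norm_exp_ofReal_mul_I (-θ)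
  have hc : Summable fun n ↦ ‖c n‖ := (summable_qBinomSeriesCoeff_mul_pow a hq hd).norm
  have hcoeff : ∑' n, c n * c n = ∑' n, phi21Term a a q q (d ^ 2) n := by
    congr 1 with n
    simp only [c, phi21Term, qBinomSeriesCoeff]
    ring
  rw [← hcoeff, ← integral_tsum_mul_tsum_exp_mul_I hc hc]
  refine intervalIntegral.integral_congr fun θ _ ↦ ?_
  rw [← div_mul_div_comm, hratio (hθ θ), hratio (hθ' θ)]

theorem residue_evaluation_Nf1_general (p b : ℂ)
    (hp1 : ‖p‖ < 1)
    (hpb : ‖p‖ < ‖b‖) (hb : ‖b‖ < 1)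
    (k : ℕ) :
    (1 / (2 * (π : ℂ))) *
      ∫ θ in (0 : ℝ)..(2 * π),
        (qPochInf (b * p ^ (1 + k) * Complex.exp (θ * Complex.I)) (p ^ 2) *
         qPochInf (b * p ^ (1 + k) * Complex.exp (-(θ * Complex.I))) (p ^ 2)) /
        (qPochInf (p ^ (1 + k) / b * Complex.exp (θ * Complex.I)) (p ^ 2) *
         qPochInf (p ^ (1 + k) / b * Complex.exp (-(θ * Complex.I))) (p ^ 2))
    = (qPochInf (p ^ (2 + 2 * k)) (p ^ 2) * qPochInf (b ^ 2) (p ^ 2)) /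
      (qPochInf (p ^ 2) (p ^ 2) * qPochInf (p ^ (2 + 2 * k) / b ^ 2) (p ^ 2)) *
      phi21 (p ^ (2 + 2 * k) / b ^ 2) (p ^ 2 / b ^ 2) (p ^ (2 + 2 * k)) (p ^ 2) (b ^ 2) := by
  have hb0 : b ≠ 0 := norm_pos_iff.1 ((norm_nonneg p).trans_lt hpb)
  have hsq {x : ℂ} (hx : ‖x‖ < 1) : ‖x ^ 2‖ < 1 := by
    simpa [norm_pow] using pow_lt_one₀ (norm_nonneg x) hx two_ne_zero
  have hd : ‖p ^ (1 + k) / b‖ < 1 := by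
    rw [norm_div, norm_pow, div_lt_one ((norm_nonneg p).trans_lt hpb)]
    exact (pow_le_of_le_one (norm_nonneg p) hp1.le (by omega)).trans_lt (by simpa using hpb)
  have hd2 : (p ^ (1 + k) / b) ^ 2 = p ^ (2 + 2 * k) / b ^ 2 := by ring
  have hbd : b * p ^ (1 + k) = b ^ 2 * (p ^ (1 + k) / b) := by field_simp
  have hbt : b ^ 2 * (p ^ (2 + 2 * k) / b ^ 2) = p ^ (2 + 2 * k) := by field_simp
  have ht : ‖p ^ (2 + 2 * k) / b ^ 2‖ < 1 := hd2 ▸ hsq hd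
  have hpb2 : ‖p ^ 2 / b ^ 2‖ < 1 := by
    rw [← div_pow]
    exact hsq (by rwa [norm_div, div_lt_one ((norm_nonneg p).trans_lt hpb)])
  have ht' : ‖p ^ (2 + 2 * k)‖ < 1 := by
    simpa [norm_pow] using pow_lt_one₀ (norm_nonneg p) hp1 (by omega : 2 + 2 * k ≠ 0)
  simp only [hbd]
  rw [integral_qPochInf_ratio (hsq hp1) hd, hd2, tsum_phi21Term_eq_heine (hsq hp1)
    (pow_ne_zero 2 hb0) (hsq hb) (hsq hp1) ht (by rwa [hbt]), hbt,
    phi21_eq_tsum_phi21Term (hsq hp1) ht hpb2 ht', phi21Term_comm (p ^ 2 / b ^ 2)]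
  field_simp

theorem residue_evaluation_Nf1 (p b : ℂ)
    (hp0 : 0 < ‖p‖) (hp1 : ‖p‖ < 1)
    (hpb : ‖p‖ < ‖b‖) (hb : ‖b‖ < 1)
    (k : ℕ) :
    (1 / (2 * (π : ℂ))) *
      ∫ θ in (0 : ℝ)..(2 * π),
        (qPochInf (b * p ^ (1 + k) * Complex.exp (θ * Complex.I)) (p ^ 2) *
         qPochInf (b * p ^ (1 + k) * Complex.exp (-(θ * Complex.I))) (p ^ 2)) /
        (qPochInf (p ^ (1 + k) / b * Complex.exp (θ * Complex.I)) (p ^ 2) *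
         qPochInf (p ^ (1 + k) / b * Complex.exp (-(θ * Complex.I))) (p ^ 2))
    = (qPochInf (p ^ (2 + 2 * k)) (p ^ 2) * qPochInf (b ^ 2) (p ^ 2)) /
      (qPochInf (p ^ 2) (p ^ 2) * qPochInf (p ^ (2 + 2 * k) / b ^ 2) (p ^ 2)) *
      phi21 (p ^ (2 + 2 * k) / b ^ 2) (p ^ 2 / b ^ 2) (p ^ (2 + 2 * k)) (p ^ 2) (b ^ 2) :=
  residue_evaluation_Nf1_general p b hp1 hpb hb k
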